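/- arXiv:1801.01676 — 7 statements merged into one kernel-verified Lean document; each statement's English description precedes it below -/
import Mathlib

section
/- A matrix A ∈ ℂ^{n×n} is G-Hamiltonian if and only if A is similar to -conj(A), i.e., there exists an invertible matrix M ∈ ℂ^{n×n} such that M⁻¹ A M = -conj(A). -/
/-!
An invertible `G` with `Aᴴ G + G A = 0` conjugates `A` to `-Aᴴ = -(conj A)ᵀ`, and similarity to
`-(conj A)ᵀ` is the same as similarity to `-conj A`, because every square matrix over a field is
similar to its transpose. To see the latter, view `Kⁿ` as a `K[X]`-module through `A`: it is a
direct sum of cyclic modules `K[X] ⧸ (g)`, each carrying the nondegenerate form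
`(u, v) ↦ coeff_{deg g - 1} (u v mod g)` for which multiplication by `X` is self-adjoint. The sum
of these forms has an invertible Gram matrix `J` with `Aᵀ J = J A`.

An invertible `S` with `Aᴴ S + S A = 0` need not be Hermitian, but this equation is stable under
`G ↦ Gᴴ`, so `(S + Sᴴ) + t • i (S - Sᴴ)` solves it and is Hermitian for every real `t`. At `t = -i`
it equals `2 S`, so its determinant is a nonzero polynomial in `t` and some real `t` avoids its
roots.
-/

open Polynomial Matrix

theorem IsConj.neg {α : Type*} [Monoid α] [HasDistribNeg α] {a b : α} (h : IsConj a b) :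
    IsConj (-a) (-b) :=
  let ⟨c, hc⟩ := h
  ⟨c, hc.neg_right⟩

theorem semiconjBy_neg_right_iff_add_eq_zero {R : Type*} [NonUnitalNonAssocRing R] {g a b : R} :
    SemiconjBy g a (-b) ↔ b * g + g * a = 0 := by
  rw [SemiconjBy, neg_mul, eq_neg_iff_add_eq_zero, add_comm]

theorem Matrix.isConj_iff_exists_isUnit_inv_mul_mul_eq {n R : Type*} [Fintype n] [DecidableEq n]
    [CommRing R] {A B : Matrix n n R} : IsConj A B ↔ ∃ M, IsUnit M ∧ M⁻¹ * A * M = B := by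
  rw [isConj_comm]
  constructor
  · rintro ⟨c, hc⟩
    refine ⟨c, c.isUnit, ?_⟩
    rw [Matrix.mul_assoc, ← hc, ← Matrix.mul_assoc, ← coe_units_inv, c.inv_mul, Matrix.one_mul]
  · rintro ⟨M, hM, rfl⟩
    refine ⟨hM.unit, ?_⟩
    rw [SemiconjBy, hM.unit_spec, Matrix.mul_assoc,
      mul_nonsing_inv_cancel_left _ _ ((isUnit_iff_isUnit_det M).mp hM)]

section SeparatingInvariantForm

variable (K R M : Type*) [CommRing K] [Semiring R] [AddCommGroup M] [Module K M] [Module R M]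

def HasSeparatingInvariantForm : Prop :=
  ∃ B : LinearMap.BilinForm K M, B.SeparatingLeft ∧ ∀ (r : R) (x y : M), B (r • x) y = B x (r • y)

variable {K R M}

theorem HasSeparatingInvariantForm.of_linearEquiv [SMul K R] [IsScalarTower K R M] {N : Type*}
    [AddCommGroup N] [Module K N] [Module R N] [IsScalarTower K R N] (e : M ≃ₗ[R] N)
    (h : HasSeparatingInvariantForm K R N) : HasSeparatingInvariantForm K R M := by
  obtain ⟨B, hB, hinvar⟩ := h
  refine ⟨B.compl₁₂ (e.restrictScalars K) (e.restrictScalars K), fun x hx => ?_, fun r x y => ?_⟩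
  · exact e.map_eq_zero_iff.mp <| hB _ fun y => by simpa using hx (e.symm y)
  · simpa using hinvar r (e x) (e y)

theorem HasSeparatingInvariantForm.pi {ι : Type*} [Fintype ι] [DecidableEq ι] {M : ι → Type*}
    [∀ i, AddCommGroup (M i)] [∀ i, Module K (M i)] [∀ i, Module R (M i)]
    (h : ∀ i, HasSeparatingInvariantForm K R (M i)) :
    HasSeparatingInvariantForm K R (∀ i, M i) := by
  choose B hB hinvar using h
  refine ⟨∑ i, (B i).compl₁₂ (LinearMap.proj i) (LinearMap.proj i), fun x hx => ?_,
    fun r x y => by simp [hinvar]⟩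
  funext i
  refine hB i (x i) fun y => ?_
  have hxy := hx (Pi.single i y)
  simp only [LinearMap.coe_sum, Finset.sum_apply, LinearMap.compl₁₂_apply, LinearMap.coe_proj,
    Function.eval] at hxy
  rwa [Fintype.sum_eq_single i fun j hj => by rw [Pi.single_eq_of_ne hj, map_zero],
    Pi.single_eq_same] at hxy

end SeparatingInvariantForm

theorem AdjoinRoot.eq_zero_of_forall_coeff_modByMonicHom_mul_eq_zero {R : Type*} [CommRing R]
    {g : R[X]} (hg : g.Monic) {u : AdjoinRoot g}
    (h : ∀ v, (modByMonicHom hg (u * v)).coeff (g.natDegree - 1) = 0) : u = 0 := by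
  obtain ⟨q, rfl⟩ := mk_surjective u
  have hq : mk g (q %ₘ g) = mk g q := by simpa using mk_leftInverse hg (mk g q)
  set f := q %ₘ g
  by_contra hne
  have hf : f ≠ 0 := by rintro hf; rw [← hq, hf, map_zero] at hne; exact hne rfl
  have : Nontrivial R := nontrivial_iff.mp (nontrivial_of_ne f 0 hf)
  have hfg : f.natDegree < g.natDegree := natDegree_lt_natDegree hf (degree_modByMonic_lt q hg)
  -- multiplying by `X ^ k` moves the leading coefficient of `f` to degree `deg g - 1`
  set k := g.natDegree - 1 - f.natDegree
  have hdeg : (f * X ^ k).degree < g.degree :=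
    degree_lt_degree (by rw [natDegree_mul_X_pow _ hf]; omega)
  have hcoeff := h (mk g (X ^ k))
  rw [← hq, ← map_mul, modByMonicHom_mk, (modByMonic_eq_self_iff hg).mpr hdeg,
    show g.natDegree - 1 = f.natDegree + k by omega, coeff_mul_X_pow] at hcoeff
  exact hf (leadingCoeff_eq_zero.mp hcoeff)

section Field

variable {K : Type*} [Field K]

theorem hasSeparatingInvariantForm_quotient_span_singleton_of_monic {g : K[X]} (hg : g.Monic) :
    HasSeparatingInvariantForm K K[X] (K[X] ⧸ K[X] ∙ g) := by
  let ℓ : (K[X] ⧸ K[X] ∙ g) →ₗ[K] K := lcoeff K (g.natDegree - 1) ∘ₗ AdjoinRoot.modByMonicHom hg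
  refine ⟨(LinearMap.mul K _).compr₂ ℓ,
    fun u hu => AdjoinRoot.eq_zero_of_forall_coeff_modByMonicHom_mul_eq_zero hg hu,
    fun r x y => ?_⟩
  simp [smul_mul_assoc, mul_smul_comm]

theorem hasSeparatingInvariantForm_quotient_span_singleton {q : K[X]} (hq : q ≠ 0) :
    HasSeparatingInvariantForm K K[X] (K[X] ⧸ K[X] ∙ q) := by
  classical
  have hspan : K[X] ∙ q = K[X] ∙ normalize q :=
    Ideal.span_singleton_eq_span_singleton.mpr (associated_normalize q)
  exact .of_linearEquiv (Submodule.quotEquivOfEq _ _ hspan)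
    (hasSeparatingInvariantForm_quotient_span_singleton_of_monic (monic_normalize hq))

theorem Module.AEval'.hasSeparatingInvariantForm {V : Type*} [AddCommGroup V] [Module K V]
    [FiniteDimensional K V] (φ : V →ₗ[K] V) :
    HasSeparatingInvariantForm K K[X] (Module.AEval' φ) := by
  obtain ⟨ι, _, p, hp, e, ⟨E⟩⟩ := Module.equiv_directSum_of_isTorsion
    (Module.AEval.isTorsion_of_finiteDimensional K V φ)
  classical
  exact .of_linearEquiv (E.trans (DirectSum.linearEquivFunOnFintype K[X] ι _))
    (.pi fun i => hasSeparatingInvariantForm_quotient_span_singleton (pow_ne_zero _ (hp i).ne_zero))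

theorem LinearMap.exists_separatingLeft_isAdjointPair_self {V : Type*} [AddCommGroup V]
    [Module K V] [FiniteDimensional K V] (φ : V →ₗ[K] V) :
    ∃ B : LinearMap.BilinForm K V, B.SeparatingLeft ∧ B.IsAdjointPair B φ φ := by
  obtain ⟨B, hB, hinvar⟩ := Module.AEval'.hasSeparatingInvariantForm φ
  let e := Module.AEval'.of φ
  refine ⟨B.compl₁₂ e e, fun x hx => ?_, fun x y => ?_⟩
  · exact e.map_eq_zero_iff.mp <| hB _ fun y => by simpa using hx (e.symm y)
  · simpa [e, Module.AEval'.X_smul_of] using hinvar X (e x) (e y)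

variable {n : Type*} [Fintype n] [DecidableEq n]

theorem Matrix.isConj_transpose (A : Matrix n n K) : IsConj A Aᵀ := by
  obtain ⟨B, hB, hadj⟩ := (toLin' A).exists_separatingLeft_isAdjointPair_self
  set J := LinearMap.toMatrix₂' K B
  have hJ : J.det ≠ 0 := LinearMap.separatingLeft_toLinearMap₂'_iff_det_ne_zero.mp <| by
    rwa [Matrix.toLinearMap₂'_toMatrix']
  have hAJ : Aᵀ * J = J * A := (isAdjointPair_toLinearMap₂' J J A A).mp <| by
    rwa [Matrix.toLinearMap₂'_toMatrix']
  exact ⟨((isUnit_iff_isUnit_det J).mpr hJ.isUnit).unit, hAJ.symm⟩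

theorem Matrix.finite_setOf_not_isUnit_add_smul (H₁ H₂ : Matrix n n K) {z : K}
    (hz : IsUnit (H₁ + z • H₂)) : {t : K | ¬ IsUnit (H₁ + t • H₂)}.Finite := by
  set p : K[X] := (H₁.map C + (X : K[X]) • H₂.map C).det
  have hp : ∀ t, p.eval t = (H₁ + t • H₂).det := fun t => by
    rw [← coe_evalRingHom, RingHom.map_det]
    congr 1
    ext i j
    simp [mul_comm _ t]
  have hp0 : p ≠ 0 := fun h0 => by
    have hpz := hp z
    rw [h0, eval_zero] at hpz
    exact ((isUnit_iff_isUnit_det _).mp hz).ne_zero hpz.symm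
  refine (p.finite_setOfPred_isRoot hp0).subset fun t ht => ?_
  simpa [hp, isUnit_iff_isUnit_det] using ht

end Field

theorem Matrix.exists_isHermitian_isUnit_mem {n : Type*} [Fintype n] [DecidableEq n]
    {W : Submodule ℂ (Matrix n n ℂ)} (hW : ∀ G ∈ W, Gᴴ ∈ W) {S : Matrix n n ℂ} (hSW : S ∈ W)
    (hS : IsUnit S) : ∃ G ∈ W, G.IsHermitian ∧ IsUnit G := by
  set H₁ := S + Sᴴ
  set H₂ := Complex.I • (S - Sᴴ)
  have hH₁ : H₁.IsHermitian := isHermitian_add_transpose_self S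
  have hH₂ : H₂.IsHermitian := by
    simp [H₂, IsHermitian, conjTranspose_smul, ← smul_neg]
  have hunit : IsUnit (H₁ + (-Complex.I) • H₂) := by
    have h2S : H₁ + (-Complex.I) • H₂ = (2 : ℂ) • S := by
      simp [H₁, H₂, smul_smul, two_smul]
    rw [h2S]
    simpa [Units.smul_def] using hS.smul (Units.mk0 (2 : ℂ) two_ne_zero)
  obtain ⟨t, ht⟩ := ((finite_setOf_not_isUnit_add_smul H₁ H₂ hunit).preimage
    Complex.ofReal_injective.injOn).exists_notMem
  refine ⟨H₁ + (t : ℂ) • H₂, ?_, hH₁.add (hH₂.smul (Complex.conj_ofReal t)), not_not.mp ht⟩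
  exact W.add_mem (W.add_mem hSW (hW S hSW))
    (W.smul_mem _ (W.smul_mem _ (W.sub_mem hSW (hW S hSW))))

/-- A matrix `A ∈ ℂ^{n×n}` is G-Hamiltonian (i.e., there is a non-singular Hermitian `G`
with `A*G + GA = 0`) if and only if `A` is similar to `-conj(A)`. -/
theorem gHamiltonian_iff_similar_neg_conj (n : ℕ) (A : Matrix (Fin n) (Fin n) ℂ) :
    (∃ G : Matrix (Fin n) (Fin n) ℂ, G.IsHermitian ∧ IsUnit G ∧ Aᴴ * G + G * A = 0) ↔
    (∃ M : Matrix (Fin n) (Fin n) ℂ, IsUnit M ∧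
      M⁻¹ * A * M = -(A.map (starRingEnd ℂ))) := by
  have hconj : IsConj (-Aᴴ) (-A.map (starRingEnd ℂ)) :=
    (isConj_transpose (A.map (starRingEnd ℂ))).symm.neg
  rw [← isConj_iff_exists_isUnit_inv_mul_mul_eq]
  constructor
  · rintro ⟨G, -, hG, hAG⟩
    exact IsConj.trans ⟨hG.unit, semiconjBy_neg_right_iff_add_eq_zero.mpr hAG⟩ hconj
  · intro h
    obtain ⟨S, hS⟩ := h.trans hconj.symm
    let W := LinearMap.ker (LinearMap.mulLeft ℂ Aᴴ + LinearMap.mulRight ℂ A)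
    have hW : ∀ G ∈ W, Gᴴ ∈ W := fun G hG => by
      simp only [W, LinearMap.mem_ker, LinearMap.add_apply, LinearMap.mulLeft_apply,
        LinearMap.mulRight_apply] at hG ⊢
      simpa [add_comm] using congrArg conjTranspose hG
    obtain ⟨G, hGW, hGh, hG⟩ := exists_isHermitian_isUnit_mem hW
      (semiconjBy_neg_right_iff_add_eq_zero.mp hS) S.isUnit
    exact ⟨G, hGh, hG, hGW⟩
end

section
/- If H ∈ ℂ^{n×n} is PT-symmetric, then H is pseudo-Hermitian; this holds regardless of whether H is diagonalizable or not. -/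
/-!
Every square matrix `H` is similar to its transpose. Decompose `Kⁿ`, viewed as a `K[X]`-module
through `H`, into cyclic modules `K[X] ⧸ (q)`; on each of them the form "coefficient of
`X ^ (deg q - 1)` in `u * v`" is nondegenerate and makes multiplication by `X` self-adjoint, so
the Gram matrix `B` of the sum of these forms is invertible and satisfies `Hᵀ B = B H`.

If `P * conj H = H * P` with `P² = 1`, then `A = Pᵀ B` is invertible and `A H = Hᴴ A`, hence the
Hermitian matrices `ℜ A` and `ℑ A` intertwine `H` and `Hᴴ` as well. Since `det (ℜ A + z ℑ A)` is a
polynomial in `z` which does not vanish at `z = i`, some real `r` makes `G = ℜ A + r ℑ A`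
invertible; then `S = -G H` is Hermitian and `H = -G⁻¹ S`.
-/

open Matrix Polynomial

universe u

namespace AdjoinRoot

variable {R : Type*} [CommRing R] {q : R[X]}

noncomputable def topCoeff (hq : q.Monic) : AdjoinRoot q →ₗ[R] R :=
  (lcoeff R (q.natDegree - 1)).comp (modByMonicHom hq)

theorem topCoeff_mk (hq : q.Monic) (f : R[X]) :
    topCoeff hq (mk q f) = (f %ₘ q).coeff (q.natDegree - 1) := by
  simp [topCoeff]

theorem exists_topCoeff_mul_ne_zero [Nontrivial R] (hq : q.Monic) {u : AdjoinRoot q}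
    (hu : u ≠ 0) : ∃ v, topCoeff hq (u * v) ≠ 0 := by
  induction u using AdjoinRoot.induction_on with | ih f => ?_
  set g := f %ₘ q
  have hfg : mk q f = mk q g := by
    rw [← mk_leftInverse hq (mk q f), modByMonicHom_mk]
  have hg : g ≠ 0 := fun h => hu (by rw [hfg, h, map_zero])
  have hgq : g.natDegree < q.natDegree :=
    natDegree_lt_natDegree hg (degree_modByMonic_lt f hq)
  -- multiplying by `X ^ m` moves the leading coefficient of `g` to the top position
  set m := q.natDegree - 1 - g.natDegree
  have hdeg : (g * X ^ m).natDegree = q.natDegree - 1 := by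
    rw [natDegree_mul_X_pow _ hg]; omega
  refine ⟨mk q (X ^ m), ?_⟩
  rw [hfg, ← map_mul, topCoeff_mk, (modByMonic_eq_self_iff hq).mpr
    (degree_lt_degree (by omega)), ← hdeg, natDegree_mul_X_pow _ hg, coeff_mul_X_pow]
  exact leadingCoeff_ne_zero.mpr hg

end AdjoinRoot

namespace Module.End

variable {K : Type u} {V : Type*} [Field K] [AddCommGroup V] [Module K V] [FiniteDimensional K V]

theorem exists_linearEquiv_pi_adjoinRoot (f : Module.End K V) :
    ∃ (ι : Type u) (_ : Fintype ι) (q : ι → K[X]) (_ : ∀ i, (q i).Monic)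
      (e : V ≃ₗ[K] Π i, AdjoinRoot (q i)), ∀ x i, e (f x) i = AdjoinRoot.root (q i) * e x i := by
  classical
  have : Module.Finite K[X] (Module.AEval' f) := Module.Finite.of_restrictScalars_finite K _ _
  obtain ⟨ι, _, p, hp, n, ⟨e⟩⟩ := Module.equiv_directSum_of_isTorsion
    (Module.AEval.isTorsion_of_finiteDimensional K V f)
  have hspan : ∀ i, (K[X] ∙ p i ^ n i) = K[X] ∙ normalize (p i ^ n i) := fun i =>
    Ideal.span_singleton_eq_span_singleton.mpr (associated_normalize _)
  let e' : Module.AEval' f ≃ₗ[K[X]] Π i, K[X] ⧸ K[X] ∙ normalize (p i ^ n i) :=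
    (e.trans (DFinsupp.mapRange.linearEquiv fun i => Submodule.quotEquivOfEq _ _ (hspan i))).trans
      (DirectSum.linearEquivFunOnFintype K[X] ι _)
  -- `AdjoinRoot q` is by definition the quotient `K[X] ⧸ K[X] ∙ q`
  refine ⟨ι, inferInstance, _, fun i => monic_normalize (pow_ne_zero _ (hp i).ne_zero),
    (Module.AEval'.of f).trans (e'.restrictScalars K), fun x i => ?_⟩
  have hX : e' (Module.AEval'.of f (f x)) = (X : K[X]) • e' (Module.AEval'.of f x) := by
    rw [← Module.AEval'.X_smul_of, map_smul]
  change e' (Module.AEval'.of f (f x)) i = AdjoinRoot.root _ *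
    (show AdjoinRoot (normalize (p i ^ n i)) from e' (Module.AEval'.of f x) i)
  rw [hX, Pi.smul_apply]
  induction e' (Module.AEval'.of f x) i using Submodule.Quotient.induction_on
  rfl

theorem exists_separatingLeft_isAdjointPair (f : Module.End K V) :
    ∃ β : LinearMap.BilinForm K V, β.SeparatingLeft ∧ β.IsAdjointPair β f f := by
  classical
  obtain ⟨ι, _, q, hq, e, he⟩ := f.exists_linearEquiv_pi_adjoinRoot
  let β : LinearMap.BilinForm K V :=
    ∑ i, ((LinearMap.mul K _).compr₂ (AdjoinRoot.topCoeff (hq i))).compl₁₂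
      ((LinearMap.proj i).comp e.toLinearMap) ((LinearMap.proj i).comp e.toLinearMap)
  have hβ : ∀ x y, β x y = ∑ i, AdjoinRoot.topCoeff (hq i) (e x i * e y i) := by simp [β]
  refine ⟨β, fun x hx => ?_, fun x y => ?_⟩
  · by_contra h
    obtain ⟨i, hi⟩ : ∃ i, e x i ≠ 0 := by
      contrapose! h
      exact e.injective (by ext i; simp [h])
    obtain ⟨v, hv⟩ := AdjoinRoot.exists_topCoeff_mul_ne_zero (hq i) hi
    have hxv := hx (e.symm (Pi.single i v))
    rw [hβ, Finset.sum_eq_single i (fun j _ hj => by simp [Pi.single_eq_of_ne hj]) (by simp)]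
      at hxv
    exact hv (by simpa using hxv)
  · simp only [hβ, he, mul_assoc, mul_left_comm]

end Module.End

namespace Matrix

variable {n : Type*} [Fintype n] [DecidableEq n]

theorem exists_isUnit_transpose_mul_eq_mul {K : Type*} [Field K] (H : Matrix n n K) :
    ∃ B : Matrix n n K, IsUnit B ∧ Hᵀ * B = B * H := by
  obtain ⟨β, hsep, hadj⟩ := Module.End.exists_separatingLeft_isAdjointPair (toLin' H)
  refine ⟨β.toMatrix', ?_, ?_⟩
  · rw [isUnit_iff_isUnit_det, isUnit_iff_ne_zero, ← separatingLeft_iff_det_ne_zero]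
    exact LinearMap.BilinForm.SeparatingLeft.toMatrix' hsep
  · rw [← Matrix.toBilin'_toMatrix' β] at hadj
    exact (isAdjointPair_toLinearMap₂' _ _ _ _).mp hadj

theorem exists_det_add_smul_ne_zero {K : Type*} [Field K] {A B : Matrix n n K} {c : K}
    (hc : (A + c • B).det ≠ 0) {s : Set K} (hs : s.Infinite) :
    ∃ t ∈ s, (A + t • B).det ≠ 0 := by
  set p : K[X] := (A.map C + (X : K[X]) • B.map C).det with hp_def
  have hp : ∀ t, p.eval t = (A + t • B).det := by
    intro t
    rw [hp_def, ← coe_evalRingHom, RingHom.map_det]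
    congr 1
    ext i j
    simp only [RingHom.mapMatrix_apply, map_apply, add_apply, smul_apply, smul_eq_mul,
      coe_evalRingHom, eval_add, eval_mul, eval_X, eval_C]
  have hp0 : p ≠ 0 := fun h => hc (by rw [← hp, h, eval_zero])
  obtain ⟨t, hts, ht⟩ := (hs.sdiff (finite_setOfPred_isRoot hp0)).nonempty
  exact ⟨t, hts, fun h => ht (by rwa [Set.mem_ofPred_eq, IsRoot.def, hp])⟩

open ComplexStarModule in
theorem exists_isHermitian_isUnit_mul_eq_conjTranspose_mul {H A : Matrix n n ℂ} (hA : IsUnit A)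
    (hAH : A * H = Hᴴ * A) :
    ∃ G : Matrix n n ℂ, G.IsHermitian ∧ IsUnit G ∧ G * H = Hᴴ * G := by
  have hAH' : Aᴴ * H = Hᴴ * Aᴴ := by
    simpa using (congrArg conjTranspose hAH).symm
  have hR : (ℜ A : Matrix n n ℂ) * H = Hᴴ * ℜ A := by
    simp [realPart_apply_coe, star_eq_conjTranspose, add_mul, mul_add, hAH, hAH']
  have hJ : (ℑ A : Matrix n n ℂ) * H = Hᴴ * ℑ A := by
    simp [imaginaryPart_apply_coe, star_eq_conjTranspose, sub_mul, mul_sub, hAH, hAH']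
  have hI : ((ℜ A : Matrix n n ℂ) + Complex.I • (ℑ A : Matrix n n ℂ)).det ≠ 0 := by
    rwa [realPart_add_I_smul_imaginaryPart, ← isUnit_iff_ne_zero, ← isUnit_iff_isUnit_det]
  obtain ⟨_, ⟨r, rfl⟩, hr⟩ :=
    exists_det_add_smul_ne_zero hI (Set.infinite_range_of_injective Complex.ofReal_injective)
  refine ⟨ℜ A + (r : ℂ) • ℑ A, ?_, ?_, ?_⟩
  · exact (ℜ A).2.add (.smul (Complex.conj_ofReal r) (ℑ A).2)
  · rwa [isUnit_iff_isUnit_det, isUnit_iff_ne_zero]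
  · simp only [add_mul, mul_add, smul_mul, mul_smul_comm, hR, hJ]

end Matrix

/-- In finite dimensions, a PT-symmetric Hamiltonian `H` (there is `P` with `P² = I` and
`P·conj(H) = H·P`) is pseudo-Hermitian: there are a non-singular Hermitian `G` and a
Hermitian `S` with `H = -G⁻¹S`.  This holds regardless of diagonalizability of `H`. -/
theorem ptSymmetric_pseudoHermitian (n : ℕ) (H : Matrix (Fin n) (Fin n) ℂ)
    (hPT : ∃ P : Matrix (Fin n) (Fin n) ℂ, P * P = 1 ∧
      P * H.map (starRingEnd ℂ) = H * P) :
    ∃ G S : Matrix (Fin n) (Fin n) ℂ, G.IsHermitian ∧ IsUnit G ∧ S.IsHermitian ∧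
      H = -(G⁻¹ * S) := by
  obtain ⟨P, hPP, hPH⟩ := hPT
  obtain ⟨B, hB, hHB⟩ := exists_isUnit_transpose_mul_eq_mul H
  have hP : IsUnit Pᵀ := (isUnit_transpose P).mpr (IsUnit.of_mul_eq_one P hPP)
  have hHP : Hᴴ * Pᵀ = Pᵀ * Hᵀ := by
    simpa [conjTranspose, transpose_map] using congrArg transpose hPH
  obtain ⟨G, hG, hGu, hGH⟩ := exists_isHermitian_isUnit_mul_eq_conjTranspose_mul
    (hP.mul hB) (by rw [mul_assoc, ← hHB, ← mul_assoc, ← hHP, mul_assoc])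
  refine ⟨G, -(G * H), hG, hGu, ?_, ?_⟩
  · rw [IsHermitian, conjTranspose_neg, conjTranspose_mul, hG.eq, hGH]
  · rw [mul_neg, neg_neg, ← mul_assoc, nonsing_inv_mul _ ((isUnit_iff_isUnit_det G).mp hGu),
      one_mul]
end

section
/- For every real number a and every m ≥ 1, the m×m Jordan block J_m(ia) with eigenvalue ia (i.e., the matrix with ia on the diagonal, 1 on the superdiagonal, and 0 elsewhere) is G-Hamiltonian: there exists a non-singular Hermitian matrix G ∈ ℂ^{m×m} such that J_m(ia)*G + G·J_m(ia) = 0. -/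
/-!
Write `J_m(ia) = ia • 1 + N` with `N` the nilpotent superdiagonal shift. Since `conj (ia) = -ia`,
the scalar part cancels in `Jᴴ G + G J`, so it is enough to find an invertible Hermitian `G` with
`Nᴴ G + G N = 0`. The antidiagonal matrix `S` with entries `(-1)^p` reverses the basis up to sign,
which turns `N` into `-Nᵀ`; moreover `S² = (-1)^(m-1)` and `Sᵀ = (-1)^(m-1) S`, so
`G = i^(m-1) S` is invertible and Hermitian.
-/

open Matrix

/-- The `m × m` Jordan block with eigenvalue `lam`. -/
def jordanBlock (m : ℕ) (lam : ℂ) : Matrix (Fin m) (Fin m) ℂ :=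
  Matrix.of fun p q => if (q : ℕ) = (p : ℕ) then lam
    else if (q : ℕ) = (p : ℕ) + 1 then 1 else 0

section

variable (R : Type*) (m : ℕ)

def superdiag [Zero R] [One R] : Matrix (Fin m) (Fin m) R :=
  of fun p q => if (q : ℕ) = p + 1 then 1 else 0

def altAntidiag [Ring R] : Matrix (Fin m) (Fin m) R :=
  of fun p q => if p.rev = q then (-1) ^ (p : ℕ) else 0

end

lemma jordanBlock_eq_smul_one_add_superdiag (m : ℕ) (lam : ℂ) :
    jordanBlock m lam = lam • 1 + superdiag ℂ m := by
  ext p q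
  simp only [jordanBlock, superdiag, Matrix.add_apply, Matrix.smul_apply, one_apply, of_apply,
    Fin.ext_iff, smul_eq_mul]
  split_ifs <;> first | omega | simp

section CommRing

variable {R : Type*} [CommRing R] {m : ℕ}

lemma neg_one_pow_val_rev (p : Fin m) :
    (-1 : R) ^ (p.rev : ℕ) = (-1) ^ (m - 1) * (-1) ^ (p : ℕ) := by
  rw [← pow_add, show m - 1 + p = p.rev + 2 * p by rw [Fin.val_rev]; omega, pow_add, pow_mul,
    neg_one_sq, one_pow, mul_one]

lemma altAntidiag_mul_apply (A : Matrix (Fin m) (Fin m) R) (p q : Fin m) :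
    (altAntidiag R m * A) p q = (-1) ^ (p : ℕ) * A p.rev q := by
  simp [altAntidiag, mul_apply, ite_mul]

lemma mul_altAntidiag_apply (A : Matrix (Fin m) (Fin m) R) (p q : Fin m) :
    (A * altAntidiag R m) p q = A p q.rev * (-1) ^ (q.rev : ℕ) := by
  simp [altAntidiag, mul_apply, mul_ite, Fin.rev_eq_iff]

lemma altAntidiag_mul_self :
    altAntidiag R m * altAntidiag R m = (-1 : R) ^ (m - 1) • (1 : Matrix (Fin m) (Fin m) R) := by
  ext p q
  rw [altAntidiag_mul_apply, Matrix.smul_apply, one_apply, smul_eq_mul]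
  simp only [altAntidiag, of_apply, Fin.rev_rev, neg_one_pow_val_rev]
  split_ifs
  · rw [mul_one, mul_left_comm, ← mul_pow, neg_one_mul, neg_neg, one_pow, mul_one]
  · simp

variable (R m) in
lemma isUnit_altAntidiag : IsUnit (altAntidiag R m) :=
  .of_mul_eq_one ((-1 : R) ^ (m - 1) • altAntidiag R m) <| by
    rw [Matrix.mul_smul, altAntidiag_mul_self, smul_smul, ← mul_pow, neg_one_mul, neg_neg,
      one_pow, one_smul]

lemma altAntidiag_transpose : (altAntidiag R m)ᵀ = (-1 : R) ^ (m - 1) • altAntidiag R m := by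
  ext p q
  simp only [altAntidiag, transpose_apply, Matrix.smul_apply, of_apply, smul_eq_mul,
    Fin.rev_eq_iff, eq_comm (a := p)]
  split_ifs with h
  · rw [h, neg_one_pow_val_rev]
  · simp

lemma superdiag_transpose_mul_altAntidiag_add :
    (superdiag R m)ᵀ * altAntidiag R m + altAntidiag R m * superdiag R m = 0 := by
  ext p q
  rw [Matrix.add_apply, mul_altAntidiag_apply, altAntidiag_mul_apply, Matrix.zero_apply]
  simp only [superdiag, transpose_apply, of_apply, Fin.val_rev]
  split_ifs with h <;> try omega
  · rw [h, pow_succ]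
    ring
  · simp

variable [StarRing R]

lemma superdiag_conjTranspose : (superdiag R m)ᴴ = (superdiag R m)ᵀ := by
  ext p q
  simp [superdiag, apply_ite star]

lemma altAntidiag_conjTranspose : (altAntidiag R m)ᴴ = (-1 : R) ^ (m - 1) • altAntidiag R m := by
  rw [← altAntidiag_transpose]
  ext p q
  simp [altAntidiag, apply_ite star]

lemma isHermitian_smul_altAntidiag {c : R} (hc : star c = (-1) ^ (m - 1) * c) :
    (c • altAntidiag R m).IsHermitian := by
  rw [IsHermitian, conjTranspose_smul, altAntidiag_conjTranspose, smul_smul, hc]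
  congr 1
  rw [mul_right_comm, ← mul_pow, neg_one_mul, neg_neg, one_pow, one_mul]

lemma smul_one_add_conjTranspose_mul_add_mul {n : Type*} [Fintype n] [DecidableEq n] {lam : R}
    (hlam : star lam = -lam) (N G : Matrix n n R) :
    (lam • 1 + N)ᴴ * G + G * (lam • 1 + N) = Nᴴ * G + G * N := by
  rw [conjTranspose_add, conjTranspose_smul, conjTranspose_one, hlam, add_mul, mul_add,
    Matrix.smul_mul, Matrix.mul_smul, one_mul, mul_one, neg_smul]
  abel

end CommRing

theorem jordanBlock_imaginary_gHamiltonian_general (m : ℕ) (a : ℝ) :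
    ∃ G : Matrix (Fin m) (Fin m) ℂ, G.IsHermitian ∧ IsUnit G ∧
      (jordanBlock m ((a : ℂ) * Complex.I))ᴴ * G
        + G * jordanBlock m ((a : ℂ) * Complex.I) = 0 := by
  refine ⟨Complex.I ^ (m - 1) • altAntidiag ℂ m, ?_, ?_, ?_⟩
  · apply isHermitian_smul_altAntidiag
    rw [star_pow, Complex.star_def, Complex.conj_I, neg_pow]
  · simpa [Units.smul_def] using
      (isUnit_altAntidiag ℂ m).smul (Complex.I_ne_zero.isUnit.pow (m - 1)).unit
  · rw [jordanBlock_eq_smul_one_add_superdiag,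
      smul_one_add_conjTranspose_mul_add_mul (by simp), Matrix.smul_mul, Matrix.mul_smul,
      ← smul_add, superdiag_conjTranspose, superdiag_transpose_mul_altAntidiag_add, smul_zero]

/-- For every real `a` and every `m ≥ 1`, the Jordan block `J_m(ia)` is G-Hamiltonian:
there is a non-singular Hermitian `G` with `J_m(ia)* G + G J_m(ia) = 0`. -/
theorem jordanBlock_imaginary_gHamiltonian (m : ℕ) (hm : 1 ≤ m) (a : ℝ) :
    ∃ G : Matrix (Fin m) (Fin m) ℂ, G.IsHermitian ∧ IsUnit G ∧
      (jordanBlock m ((a : ℂ) * Complex.I))ᴴ * G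
        + G * jordanBlock m ((a : ℂ) * Complex.I) = 0 :=
  jordanBlock_imaginary_gHamiltonian_general m a
end

section
/- For all real numbers a, b and every l ≥ 1, the 2l×2l block-diagonal matrix F₂ = diag(J_l(a+bi), J_l(-a+bi)) is G-Hamiltonian: there exists a non-singular Hermitian matrix G ∈ ℂ^{2l×2l} such that F₂*G + G·F₂ = 0. An explicit choice is the anti-block-diagonal matrix G whose anti-diagonal consists of l copies of the 2×2 block K₂ = [[0, i], [-i, 0]]. -/
open Matrix

/-- The `2l × 2l` block-diagonal matrix `diag(J_l(lam), J_l(mu))` built from two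
`l × l` Jordan blocks. -/
def F2 (l : ℕ) (lam mu : ℂ) : Matrix (Fin (2 * l)) (Fin (2 * l)) ℂ :=
  Matrix.of fun p q =>
    if (p : ℕ) < l ∧ (q : ℕ) < l then
      (if (q : ℕ) = (p : ℕ) then lam else if (q : ℕ) = (p : ℕ) + 1 then 1 else 0)
    else if l ≤ (p : ℕ) ∧ l ≤ (q : ℕ) then
      (if (q : ℕ) = (p : ℕ) then mu else if (q : ℕ) = (p : ℕ) + 1 then 1 else 0)
    else 0

/-- The anti-block-diagonal `2l × 2l` matrix whose anti-diagonal consists of `l` copies of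
the `2 × 2` block `K₂ = [[0, i], [-i, 0]]`: its entry at `(p, q)` is `i` (resp. `-i`)
when `p + q = 2l - 1` and `p` is even (resp. odd), and `0` otherwise. -/
def G2 (l : ℕ) : Matrix (Fin (2 * l)) (Fin (2 * l)) ℂ :=
  Matrix.of fun p q =>
    if (p : ℕ) + (q : ℕ) = 2 * l - 1 then
      (if Even (p : ℕ) then Complex.I else -Complex.I)
    else 0

lemma G2_mul (l : ℕ) (hl : 1 ≤ l) (A : Matrix (Fin (2*l)) (Fin (2*l)) ℂ) (p r : Fin (2*l)) :
    (G2 l * A) p r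
      = (if Even (p:ℕ) then Complex.I else -Complex.I) * A ⟨2*l-1-(p:ℕ), by omega⟩ r := by
  rw [Matrix.mul_apply]
  rw [Finset.sum_eq_single (⟨2*l-1-(p:ℕ), by omega⟩ : Fin (2*l))]
  · congr 1
    show (if (p:ℕ) + (2*l-1-(p:ℕ)) = 2*l-1 then _ else 0) = _
    rw [if_pos (by have := p.isLt; omega)]
  · intro q _ hq
    have h : (p:ℕ) + (q:ℕ) ≠ 2*l-1 := fun h => hq (Fin.ext (by have := p.isLt; simp; omega))
    show (if (p:ℕ)+(q:ℕ) = 2*l-1 then _ else 0) * _ = 0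
    rw [if_neg h, zero_mul]
  · intro h; exact absurd (Finset.mem_univ _) h

lemma mul_G2 (l : ℕ) (hl : 1 ≤ l) (A : Matrix (Fin (2*l)) (Fin (2*l)) ℂ) (p r : Fin (2*l)) :
    (A * G2 l) p r
      = A p ⟨2*l-1-(r:ℕ), by omega⟩ * (if Even (r:ℕ) then -Complex.I else Complex.I) := by
  rw [Matrix.mul_apply]
  rw [Finset.sum_eq_single (⟨2*l-1-(r:ℕ), by omega⟩ : Fin (2*l))]
  · congr 1
    show (if (2*l-1-(r:ℕ)) + (r:ℕ) = 2*l-1 then (if Even (2*l-1-(r:ℕ)) then Complex.I else -Complex.I) else 0) = _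
    rw [if_pos (by have := r.isLt; omega)]
    have hr := r.isLt
    rcases Nat.even_or_odd (r:ℕ) with h | h
    · rw [if_neg, if_pos h]
      rw [Nat.even_iff] at *
      omega
    · rw [if_pos, if_neg (by simpa [Nat.odd_iff] using h)]
      rw [Nat.even_iff]; rw [Nat.odd_iff] at h
      omega
  · intro q _ hq
    have h : (q:ℕ) + (r:ℕ) ≠ 2*l-1 := fun h => hq (Fin.ext (by have := r.isLt; simp; omega))
    show _ * (if (q:ℕ)+(r:ℕ) = 2*l-1 then _ else 0) = 0
    rw [if_neg h, mul_zero]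
  · intro h; exact absurd (Finset.mem_univ _) h

lemma G2_herm (l : ℕ) (hl : 1 ≤ l) : (G2 l).IsHermitian := by
  ext p q
  have hp := p.isLt
  have hq := q.isLt
  simp only [conjTranspose_apply, G2, of_apply, Nat.even_iff]
  split_ifs <;> simp_all <;> omega

lemma G2_sq (l : ℕ) (hl : 1 ≤ l) : G2 l * G2 l = 1 := by
  ext p r
  rw [G2_mul l hl]
  have hp := p.isLt
  have hr := r.isLt
  show _ * (if (2*l-1-(p:ℕ)) + (r:ℕ) = 2*l-1 then (if Even (2*l-1-(p:ℕ)) then Complex.I else -Complex.I) else 0) = _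
  rw [Matrix.one_apply]
  by_cases h : p = r
  · subst h
    rw [if_pos rfl,
      if_pos (show (2*l-1-(p:ℕ)) + (p:ℕ) = 2*l-1 by omega)]
    rcases Nat.even_or_odd (p:ℕ) with h | h
    · rw [if_pos h, if_neg (show ¬ Even (2*l-1-(p:ℕ)) by rw [Nat.even_iff] at *; omega)]
      simp [Complex.I_mul_I]
    · rw [if_neg (show ¬ Even (p:ℕ) by simpa [Nat.odd_iff] using h),
        if_pos (show Even (2*l-1-(p:ℕ)) by rw [Nat.even_iff]; rw [Nat.odd_iff] at h; omega)]
      simp [Complex.I_mul_I]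
  · rw [if_neg (show ¬((2*l-1-(p:ℕ)) + (r:ℕ) = 2*l-1) from fun hh => h (Fin.ext (by omega))),
      mul_zero, if_neg h]

set_option maxHeartbeats 2000000 in
lemma key_eq (l : ℕ) (hl : 1 ≤ l) (a b : ℝ) :
    (F2 l ((a : ℂ) + (b : ℂ) * Complex.I) (-(a : ℂ) + (b : ℂ) * Complex.I))ᴴ * G2 l
        + G2 l * F2 l ((a : ℂ) + (b : ℂ) * Complex.I) (-(a : ℂ) + (b : ℂ) * Complex.I)
          = 0 := by
  ext p r
  rw [Matrix.add_apply, mul_G2 l hl, G2_mul l hl, Matrix.zero_apply, conjTranspose_apply]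
  have hp := p.isLt
  have hr := r.isLt
  simp only [F2, Matrix.of_apply, Nat.even_iff, Complex.star_def]
  split_ifs <;>
    first
      | (exfalso; omega)
      | (simp only [map_zero, _root_.map_one, map_add, _root_.map_mul, map_neg, Complex.conj_ofReal,
          Complex.conj_I]; ring)

/-- For all real `a, b` and `l ≥ 1`, the matrix `F₂ = diag(J_l(a+bi), J_l(-a+bi))` is
G-Hamiltonian; an explicit choice of the non-singular Hermitian matrix `G` is the
anti-block-diagonal matrix whose anti-diagonal consists of `l` copies of
`K₂ = [[0, i], [-i, 0]]`. -/
theorem F2_gHamiltonian (l : ℕ) (hl : 1 ≤ l) (a b : ℝ) :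
    (∃ G : Matrix (Fin (2 * l)) (Fin (2 * l)) ℂ, G.IsHermitian ∧ IsUnit G ∧
      (F2 l ((a : ℂ) + (b : ℂ) * Complex.I) (-(a : ℂ) + (b : ℂ) * Complex.I))ᴴ * G
        + G * F2 l ((a : ℂ) + (b : ℂ) * Complex.I) (-(a : ℂ) + (b : ℂ) * Complex.I) = 0) ∧
    ((G2 l).IsHermitian ∧ IsUnit (G2 l) ∧
      (F2 l ((a : ℂ) + (b : ℂ) * Complex.I) (-(a : ℂ) + (b : ℂ) * Complex.I))ᴴ * G2 l
        + G2 l * F2 l ((a : ℂ) + (b : ℂ) * Complex.I) (-(a : ℂ) + (b : ℂ) * Complex.I)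
          = 0) := by
  have h1 := G2_herm l hl
  have h2 : IsUnit (G2 l) := ⟨⟨G2 l, G2 l, G2_sq l hl, G2_sq l hl⟩, rfl⟩
  have h3 := key_eq l hl a b
  exact ⟨⟨G2 l, h1, h2, h3⟩, h1, h2, h3⟩
end

section
/- For a = b = 0 and any real c with |c| ≠ 7, the matrix H(0,0,c) is diagonalizable over ℂ: there exists an invertible matrix Q ∈ ℂ^{4×4} such that Q⁻¹·H·Q is a diagonal matrix. In particular, at this exceptional point (where the eigenvalue 4 has multiplicity 2), the eigenvalues coalesce but the Hamiltonian remains diagonalizable. -/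
open Matrix

/-- The PT-symmetric Hamiltonian `H(a,b,c)` from Eq. (1) of the paper. -/
noncomputable def Hm (a b c : ℝ) : Matrix (Fin 4) (Fin 4) ℂ :=
  !![(-3 : ℂ), (c : ℂ), 0, 0;
     (c : ℂ), (-3 : ℂ), 0, 0;
     (b : ℂ) - (c : ℂ) * Complex.I, 7 * Complex.I + (a : ℂ),
       4 - Complex.I * (a : ℂ), Complex.I * (b : ℂ);
     -7 * Complex.I + (a : ℂ), (b : ℂ) + Complex.I * (c : ℂ),
       -(Complex.I * (b : ℂ)), 4 + Complex.I * (a : ℂ)]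

/-! The columns `(1, 1, -i, i)`, `(1, -1, i, i)`, `e₃`, `e₄` are eigenvectors of `H(0,0,c)` for
the eigenvalues `-3 + c`, `-3 - c`, `4`, `4`, and they do not depend on `c`. The matrix they form
has determinant `-2`, so it diagonalizes `H(0,0,c)` for every real `c`, even when `-3 ± c`
coalesces with the double eigenvalue `4`. -/

theorem Matrix.inv_mul_mul_eq_of_mul_eq {n R : Type*} [Fintype n] [DecidableEq n] [CommRing R]
    {A B Q : Matrix n n R} (hQ : IsUnit Q) (h : A * Q = Q * B) : Q⁻¹ * A * Q = B := by
  rw [mul_assoc, h, ← mul_assoc, nonsing_inv_mul Q ((isUnit_iff_isUnit_det Q).mp hQ), one_mul]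

def Hm_zero_eigenvectors : Matrix (Fin 4) (Fin 4) ℂ :=
  !![1, 1, 0, 0;
     1, -1, 0, 0;
     -Complex.I, Complex.I, 1, 0;
     Complex.I, Complex.I, 0, 1]

theorem det_Hm_zero_eigenvectors : Hm_zero_eigenvectors.det = -2 := by
  simp [Hm_zero_eigenvectors, det_succ_row_zero, Fin.sum_univ_succ, Fin.succAbove]
  ring

theorem isUnit_Hm_zero_eigenvectors : IsUnit Hm_zero_eigenvectors := by
  rw [isUnit_iff_isUnit_det, det_Hm_zero_eigenvectors]
  norm_num

theorem Hm_zero_mul_eigenvectors (c : ℝ) :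
    Hm 0 0 c * Hm_zero_eigenvectors =
      Hm_zero_eigenvectors * diagonal ![(-3 : ℂ) + c, -3 - c, 4, 4] := by
  ext i j
  fin_cases i <;> fin_cases j <;>
    simp [Hm, Hm_zero_eigenvectors, mul_apply, Fin.sum_univ_four] <;>
    ring_nf

theorem Hm_zero_diagonalizable_general (c : ℝ) :
    ∃ Q : Matrix (Fin 4) (Fin 4) ℂ, IsUnit Q ∧
      ∃ d : Fin 4 → ℂ, Q⁻¹ * Hm 0 0 c * Q = Matrix.diagonal d :=
  ⟨Hm_zero_eigenvectors, isUnit_Hm_zero_eigenvectors, _,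
    inv_mul_mul_eq_of_mul_eq isUnit_Hm_zero_eigenvectors (Hm_zero_mul_eigenvectors c)⟩

/-- For `a = b = 0` and any real `c` with `|c| ≠ 7`, the matrix `H(0,0,c)` is
diagonalizable over `ℂ`: the eigenvalues coalesce at this exceptional point, but the
Hamiltonian remains diagonalizable. -/
theorem Hm_zero_diagonalizable (c : ℝ) (hc : |c| ≠ 7) :
    ∃ Q : Matrix (Fin 4) (Fin 4) ℂ, IsUnit Q ∧
      ∃ d : Fin 4 → ℂ, Q⁻¹ * Hm 0 0 c * Q = Matrix.diagonal d :=
  Hm_zero_diagonalizable_general c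
end

section
/- For all real ω, ε, γ, the matrix A(ω,ε,γ) is G-Hamiltonian with the explicit matrix G₁: the 4×4 matrix G₁ with rows (0, -2iγ, 0, i), (2iγ, 0, i, 0), (0, -i, 0, 0), (-i, 0, 0, 0) is Hermitian and non-singular and satisfies A*G₁ + G₁A = 0, where A* denotes the conjugate transpose of A. -/
/-!
`G₁` is Hermitian with determinant `1`, and `G₁ A = -i S` for a real symmetric `S`.
Since `G₁` is Hermitian, `A* G₁ = (G₁ A)* = i S`, which cancels `G₁ A`.
-/

open Matrix

/-- The coefficient matrix `A(ω,ε,γ)` of the coupled-oscillator system of Eq. (27)–(28),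
viewed as a complex matrix with real entries. -/
noncomputable def Am (om ep ga : ℝ) : Matrix (Fin 4) (Fin 4) ℂ :=
  !![0, 0, 1, 0;
     0, 0, 0, 1;
     -((om : ℂ) ^ 2), -(ep : ℂ), -2 * (ga : ℂ), 0;
     -(ep : ℂ), -((om : ℂ) ^ 2), 0, 2 * (ga : ℂ)]

/-- The explicit matrix `G₁` of Eq. (31) of the paper, depending on `γ`. -/
noncomputable def G1 (ga : ℝ) : Matrix (Fin 4) (Fin 4) ℂ :=
  !![0, -2 * Complex.I * (ga : ℂ), 0, Complex.I;
     2 * Complex.I * (ga : ℂ), 0, Complex.I, 0;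
     0, -Complex.I, 0, 0;
     -Complex.I, 0, 0, 0]

theorem Matrix.IsHermitian.conjTranspose_mul_add_mul_eq_zero {n α : Type*} [Fintype n]
    [CommRing α] [StarRing α] {G A S : Matrix n n α} {c : α} (hG : G.IsHermitian)
    (hS : S.IsHermitian) (hc : star c = -c) (hGA : G * A = c • S) :
    Aᴴ * G + G * A = 0 :=
  calc Aᴴ * G + G * A = (G * A)ᴴ + G * A := by rw [conjTranspose_mul, hG.eq]
    _ = 0 := by rw [hGA, conjTranspose_smul, hS.eq, hc, neg_smul, neg_add_cancel]

noncomputable def Sm (om ep : ℝ) : Matrix (Fin 4) (Fin 4) ℂ :=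
  !![(ep : ℂ), (om : ℂ) ^ 2, 0, 0;
     (om : ℂ) ^ 2, (ep : ℂ), 0, 0;
     0, 0, 0, 1;
     0, 0, 1, 0]

theorem Sm_isHermitian (om ep : ℝ) : (Sm om ep).IsHermitian := by
  ext i j
  fin_cases i <;> fin_cases j <;> simp [Sm, ← Complex.ofReal_pow]

theorem G1_isHermitian (ga : ℝ) : (G1 ga).IsHermitian := by
  ext i j
  fin_cases i <;> fin_cases j <;> simp [G1]

theorem det_G1 (ga : ℝ) : (G1 ga).det = 1 := by
  simp [G1, det_succ_row_zero, Fin.sum_univ_succ, Fin.succAbove, mul_assoc, pow_succ]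

theorem G1_mul_Am (om ep ga : ℝ) : G1 ga * Am om ep ga = -Complex.I • Sm om ep := by
  ext i j
  fin_cases i <;> fin_cases j <;> simp [G1, Am, Sm, mul_apply, Fin.sum_univ_four] <;> ring

/-- For all real `ω, ε, γ`, the matrix `A(ω,ε,γ)` is G-Hamiltonian with the explicit
matrix `G₁`: `G₁` is Hermitian and non-singular and `A*G₁ + G₁A = 0`. -/
theorem Am_gHamiltonian_G1 (om ep ga : ℝ) :
    (G1 ga).IsHermitian ∧ IsUnit (G1 ga) ∧
      (Am om ep ga)ᴴ * G1 ga + G1 ga * Am om ep ga = 0 :=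
  ⟨G1_isHermitian ga, (isUnit_iff_isUnit_det _).mpr (det_G1 ga ▸ isUnit_one),
    (G1_isHermitian ga).conjTranspose_mul_add_mul_eq_zero (Sm_isHermitian om ep) (by simp)
      (G1_mul_Am om ep ga)⟩
end

section
/- For all real ω, ε, γ, the characteristic polynomial of the matrix A(ω,ε,γ) equals (λ² + ω²)² - 4γ²λ² - ε². Consequently, λ is an eigenvalue of A if and only if (λ² + ω² + 2γλ)(λ² + ω² - 2γλ) = ε². -/
/-!
`A(ω,ε,γ)` is the first-order form of the oscillator system `ẍ + D ẋ + K x = 0` with damping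
`D = diag(2γ, -2γ)` and stiffness `K = !![ω², ε; ε, ω²]`, so its characteristic polynomial is
`det(λ² + λ D + K) = (λ² + 2γλ + ω²)(λ² - 2γλ + ω²) - ε²`. Over `ℂ` the spectrum is the root set
of the characteristic polynomial, which in this factored form gives the eigenvalue equation.
-/

open Matrix Polynomial

/-- First-order form of `ẍ + diag(d₁, d₂) ẋ + !![k₁₁, k₁₂; k₂₁, k₂₂] x = 0`. -/
theorem Matrix.charpoly_secondOrderSystem_fin_two {R : Type*} [CommRing R]
    (k₁₁ k₁₂ k₂₁ k₂₂ d₁ d₂ : R) :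
    !![0, 0, 1, 0; 0, 0, 0, 1; -k₁₁, -k₁₂, -d₁, 0; -k₂₁, -k₂₂, 0, -d₂].charpoly
      = (X ^ 2 + C d₁ * X + C k₁₁) * (X ^ 2 + C d₂ * X + C k₂₂) - C (k₁₂ * k₂₁) := by
  rw [charpoly, det_succ_row_zero, Fin.sum_univ_four]
  simp only [charmatrix_apply, of_apply, det_fin_three, submatrix_apply, Fin.succAbove, cons_val,
    Fin.reduceSucc, Fin.reduceCastSucc, Fin.coe_ofNat_eq_mod, diagonal_apply_eq, map_zero,
    ↓reduceIte, map_neg, ne_eq, Fin.reduceEq, not_false_eq_true, diagonal_apply_ne, map_one,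
    Fin.reduceLT, map_mul]
  ring

theorem Am_eq_secondOrderSystem (om ep ga : ℝ) :
    Am om ep ga = !![0, 0, 1, 0; 0, 0, 0, 1;
      -((om : ℂ) ^ 2), -(ep : ℂ), -(2 * (ga : ℂ)), 0;
      -(ep : ℂ), -((om : ℂ) ^ 2), 0, -(-2 * (ga : ℂ))] := by
  rw [Am, neg_mul, neg_neg]

/-- The characteristic polynomial of `A(ω,ε,γ)` is `(λ² + ω²)² - 4γ²λ² - ε²`;
consequently, `λ` is an eigenvalue of `A` iff `(λ²+ω²+2γλ)(λ²+ω²-2γλ) = ε²`. -/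
theorem Am_charpoly (om ep ga : ℝ) :
    (Am om ep ga).charpoly
      = (X ^ 2 + C ((om : ℂ) ^ 2)) ^ 2 - C (4 * (ga : ℂ) ^ 2) * X ^ 2 - C ((ep : ℂ) ^ 2) ∧
    (∀ lam : ℂ, lam ∈ spectrum ℂ (Am om ep ga) ↔
      (lam ^ 2 + (om : ℂ) ^ 2 + 2 * (ga : ℂ) * lam)
        * (lam ^ 2 + (om : ℂ) ^ 2 - 2 * (ga : ℂ) * lam) = (ep : ℂ) ^ 2) := by
  have hfactor := Am_eq_secondOrderSystem om ep ga ▸ charpoly_secondOrderSystem_fin_two _ _ _ _ _ _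
  refine ⟨?_, fun lam => ?_⟩
  · rw [hfactor]
    simp only [map_neg, map_mul, map_pow, map_ofNat]
    ring
  · rw [mem_spectrum_iff_isRoot_charpoly, IsRoot.def, hfactor]
    simp only [eval_sub, eval_add, eval_mul, eval_pow, eval_C, eval_X, sub_eq_zero]
    constructor <;> intro h <;> linear_combination h
end
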